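/- If a PARS is distribution confluent, then it has unique limit distributions: if D is the root of two infinite ↠-chains (Eᵢ) and (Fⱼ) whose induced mathematical distributions converge in L¹ distance to terminal mathematical distributions E_∞ and F_∞ respectively, then E_∞ = F_∞. -/

import Mathlib

open Relation
open scoped NNReal ENNReal

abbrev PDist (A : Type) := List (ℝ≥0 × A)

namespace PPARS

variable {A X : Type}

/-- Total weight of a list distribution. -/
def weight (D : PDist A) : ℝ≥0 := (D.map Prod.fst).sum

/-- Scale every weight of a distribution by `α`. -/
def scale (α : ℝ≥0) (D : PDist A) : PDist A := D.map (fun pa => (α * pa.1, pa.2))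

open Classical in
/-- Total weight that `D` assigns to the element `a`. -/
noncomputable def wt (D : PDist A) (a : A) : ℝ≥0 :=
  (D.map (fun pa => if pa.2 = a then pa.1 else 0)).sum

/-- The Flip rule, closed under list contexts. -/
inductive FlipS : PDist A → PDist A → Prop
  | mk (E₁ E₂ : PDist A) (p q : ℝ≥0) (a b : A) :
      FlipS (E₁ ++ [(p,a),(q,b)] ++ E₂) (E₁ ++ [(q,b),(p,a)] ++ E₂)

/-- The Join rule, closed under list contexts. -/
inductive JoinS : PDist A → PDist A → Prop
  | mk (E₁ E₂ : PDist A) (p q : ℝ≥0) (a : A) :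
      JoinS (E₁ ++ [(p,a),(q,a)] ++ E₂) (E₁ ++ [(p+q,a)] ++ E₂)

/-- The Split rule, closed under list contexts. -/
inductive SplitS : PDist A → PDist A → Prop
  | mk (E₁ E₂ : PDist A) (p q : ℝ≥0) (a : A) :
      SplitS (E₁ ++ [(p+q,a)] ++ E₂) (E₁ ++ [(p,a),(q,a)] ++ E₂)

/-- One `∼`-step: congruence closure of Flip, Join and Split. -/
def SimStep (D E : PDist A) : Prop := FlipS D E ∨ JoinS D E ∨ SplitS D E

/-- One Flip-or-Join step. -/
def FJ (D E : PDist A) : Prop := FlipS D E ∨ JoinS D E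

/-- Distribution equivalence `≈`. -/
def DEquiv : PDist A → PDist A → Prop := ReflTransGen SimStep

/-- Parallel evolution `⇒_P` for a PARS relation `R`. -/
inductive PEvol (R : A → PDist A → Prop) : PDist A → PDist A → Prop
  | nil : PEvol R [] []
  | keep {ds ds' : PDist A} (p : ℝ≥0) (a : A) :
      PEvol R ds ds' → PEvol R ((p,a) :: ds) ((p,a) :: ds')
  | evolve {a : A} {D ds ds' : PDist A} (p : ℝ≥0) :
      R a D → PEvol R ds ds' → PEvol R ((p,a) :: ds) (scale p D ++ ds')

/-- Proper parallel evolution `⇒_P¹`: at least one element evolves. -/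
inductive PEvol1 (R : A → PDist A → Prop) : PDist A → PDist A → Prop
  | evolve {a : A} {D ds ds' : PDist A} (p : ℝ≥0) :
      R a D → PEvol R ds ds' → PEvol1 R ((p,a) :: ds) (scale p D ++ ds')
  | keep {ds ds' : PDist A} (p : ℝ≥0) (a : A) :
      PEvol1 R ds ds' → PEvol1 R ((p,a) :: ds) ((p,a) :: ds')

/-- The determinisation relation `↠ = ⇒_P ∪ ≈`. -/
def Red (R : A → PDist A → Prop) (D E : PDist A) : Prop := PEvol R D E ∨ DEquiv D E

/-- `R` defines a PARS: successor distributions are normalised. -/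
def IsPARS (R : A → PDist A → Prop) : Prop := ∀ a D, R a D → weight D = 1

/-- A terminal element has no successor distribution. -/
def Terminal (R : A → PDist A → Prop) (a : A) : Prop := ∀ D, ¬ R a D

/-- A terminal distribution contains only terminal elements. -/
def TerminalD (R : A → PDist A → Prop) (D : PDist A) : Prop := ∀ pa ∈ D, Terminal R pa.2

/-- Classical confluence of a relation. -/
def Confluent (r : X → X → Prop) : Prop :=
  ∀ a b c, ReflTransGen r a b → ReflTransGen r a c →
    ∃ d, ReflTransGen r b d ∧ ReflTransGen r c d

/-- Raw (finite) computation trees. -/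
inductive CTree (A : Type) where
  | leaf (a : A)
  | node (a : A) (cs : List (ℝ≥0 × CTree A))

def CTree.root : CTree A → A
  | .leaf a => a
  | .node a _ => a

/-- `IsTree R t a`: `t` is a computation tree of the PARS `R` with root `a`. -/
inductive IsTree (R : A → PDist A → Prop) : CTree A → A → Prop
  | leaf (a : A) : IsTree R (.leaf a) a
  | node (a : A) (cs : List (ℝ≥0 × CTree A)) :
      R a (cs.map fun x => (x.1, x.2.root)) →
      (∀ x ∈ cs, IsTree R x.2 x.2.root) →
      IsTree R (.node a cs) a

mutual
/-- Support of a computation tree. -/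
def supp : CTree A → PDist A
  | .leaf a => [(1, a)]
  | .node _ cs => suppL cs
def suppL : List (ℝ≥0 × CTree A) → PDist A
  | [] => []
  | (p, t) :: ts => scale p (supp t) ++ suppL ts
end

/-- A tree is maximal when all its leaves are terminal elements. -/
inductive MaximalT (R : A → PDist A → Prop) : CTree A → Prop
  | leaf (a : A) : Terminal R a → MaximalT R (.leaf a)
  | node (a : A) (cs : List (ℝ≥0 × CTree A)) :
      (∀ x ∈ cs, MaximalT R x.2) → MaximalT R (.node a cs)

end PPARS


namespace PPARS
variable {A X : Type}

/-- `R` modulo `≈`: an equivalence step, then `r`, then an equivalence step. -/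
def ModE (r : PDist A → PDist A → Prop) : PDist A → PDist A → Prop :=
  Relation.Comp DEquiv (Relation.Comp r DEquiv)

/-- `n`-fold composition of a relation. -/
def npow (r : X → X → Prop) : ℕ → X → X → Prop
  | 0 => Eq
  | n+1 => Relation.Comp r (npow r n)

/-- A local relation on distributions. -/
def LocalRel (r : PDist A → PDist A → Prop) : Prop :=
  ∀ (α β : ℝ≥0) (D₁ D₂ E : PDist A), r (scale α D₁ ++ scale β D₂) E →
    ∃ E₁ E₂, E = scale α E₁ ++ scale β E₂ ∧ r D₁ E₁ ∧ r D₂ E₂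

/-- A compositional relation on distributions. -/
def Compositional (r : PDist A → PDist A → Prop) : Prop :=
  ∀ (α β : ℝ≥0) (D₁ E₁ D₂ E₂ : PDist A), r D₁ E₁ → r D₂ E₂ →
    r (scale α D₁ ++ scale β D₂) (scale α E₁ ++ scale β E₂)

/-- `(γ, δ)` closes `(α, β)` on `D`. -/
def Closes (γ δ α β : PDist A → PDist A → Prop) (D : PDist A) : Prop :=
  ∀ E F, α D E → β D F → ∃ C, γ E C ∧ δ F C

open Classical in
/-- Liveness: total weight assigned to non-terminal elements. -/
noncomputable def liv (R : A → PDist A → Prop) (D : PDist A) : ℝ≥0 :=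
  (D.map (fun pa => if Terminal R pa.2 then 0 else pa.1)).sum

/-- L¹ distance between mathematical distributions. -/
noncomputable def fdist (f g : A → ℝ≥0) : ℝ := ∑' a : A, |(f a : ℝ) - (g a : ℝ)|

/-- L¹ distance between the mathematical distributions induced by two list
distributions. -/
noncomputable def ldist (D E : PDist A) : ℝ := fdist (wt D) (wt E)

end PPARS

/-!
Along `↠` the total weight is preserved and the weight of every terminal element can only grow,
so a distribution `D` moves by at most `2 · liv D` on its way to any reduct. Measured against a
terminal distribution `G`, all of `liv D` is misplaced mass, so `liv D ≤ dist(D, G)`; hence every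
reduct `C` of `D` satisfies `dist(C, G) ≤ 3 · dist(D, G)`. Choose `E_N` and `F_M` within `ε / 6`
of their limits and, by confluence, a common reduct `C` of both: then
`dist(E_∞, F_∞) ≤ dist(C, E_∞) + dist(C, F_∞) < ε`.
-/

namespace PPARS

open scoped Classical

variable {A : Type} {R : A → PDist A → Prop}

lemma reflTransGen_zero_of_forall_succ {α : Type*} {r : α → α → Prop} {f : ℕ → α}
    (h : ∀ i, r (f i) (f (i + 1))) (n : ℕ) : ReflTransGen r (f 0) (f n) :=
  (reflTransGen_of_succ_of_le (fun i j => r (f i) (f j)) (fun i _ => h i) n.zero_le).lift f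
    fun _ _ => id

lemma wt_nil (a : A) : wt [] a = 0 := rfl

lemma wt_cons (p : ℝ≥0) (b : A) (D : PDist A) (a : A) :
    wt ((p, b) :: D) a = (if b = a then p else 0) + wt D a := by
  simp [wt]

lemma wt_append (D E : PDist A) (a : A) : wt (D ++ E) a = wt D a + wt E a := by
  simp [wt]

lemma weight_cons (p : ℝ≥0) (b : A) (D : PDist A) : weight ((p, b) :: D) = p + weight D := by
  simp [weight]

lemma weight_append (D E : PDist A) : weight (D ++ E) = weight D + weight E := by
  simp [weight]

lemma weight_scale (p : ℝ≥0) (D : PDist A) : weight (scale p D) = p * weight D := by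
  simp only [weight, scale, List.map_map, Function.comp_def, List.sum_map_mul_left]

noncomputable def support (D : PDist A) : Finset A := (D.map Prod.snd).toFinset

lemma mem_support {D : PDist A} {pa : ℝ≥0 × A} (h : pa ∈ D) : pa.2 ∈ support D :=
  List.mem_toFinset.mpr (List.mem_map_of_mem h)

lemma wt_eq_zero_of_notMem_support {D : PDist A} {a : A} (h : a ∉ support D) : wt D a = 0 := by
  refine List.sum_eq_zero fun x hx => ?_
  obtain ⟨pa, hpa, rfl⟩ := List.mem_map.mp hx
  exact if_neg fun hpa' : pa.2 = a => h (hpa' ▸ mem_support hpa)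

lemma summable_wt (D : PDist A) : Summable (wt D) :=
  summable_of_ne_finset_zero fun _ => wt_eq_zero_of_notMem_support

lemma sum_mul_wt (c : A → ℝ≥0) {D : PDist A} {s : Finset A} (hs : ∀ pa ∈ D, pa.2 ∈ s) :
    ∑ a ∈ s, c a * wt D a = (D.map fun pa => c pa.2 * pa.1).sum := by
  induction D with
  | nil => simp [wt]
  | cons pa D ih =>
    obtain ⟨p, b⟩ := pa
    simp only [wt_cons, mul_add, mul_ite, mul_zero, Finset.sum_add_distrib,
      Finset.sum_ite_eq, if_pos (hs _ List.mem_cons_self), List.map_cons, List.sum_cons,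
      ih fun pa hpa => hs pa (List.mem_cons_of_mem _ hpa)]

lemma weight_eq_sum_wt {D : PDist A} {s : Finset A} (hs : ∀ pa ∈ D, pa.2 ∈ s) :
    weight D = ∑ a ∈ s, wt D a := by
  simpa [weight] using (sum_mul_wt (fun _ => 1) hs).symm

lemma liv_eq_sum_wt {D : PDist A} {s : Finset A} (hs : ∀ pa ∈ D, pa.2 ∈ s) :
    liv R D = ∑ a ∈ s, if Terminal R a then 0 else wt D a := by
  simpa [liv, ite_mul] using (sum_mul_wt (fun a => if Terminal R a then 0 else 1) hs).symm

lemma SimStep.wt_eq {D E : PDist A} (h : SimStep D E) : wt E = wt D := by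
  funext a
  rcases h with ⟨E₁, E₂, p, q, b, c⟩ | ⟨E₁, E₂, p, q, b⟩ | ⟨E₁, E₂, p, q, b⟩ <;>
  · simp only [wt_append, wt_cons, wt_nil]
    split_ifs <;> ring

lemma DEquiv.wt_eq {D E : PDist A} (h : DEquiv D E) : wt E = wt D := by
  induction h with
  | refl => rfl
  | tail _ hstep ih => rw [hstep.wt_eq, ih]

lemma weight_eq_of_wt_eq {D E : PDist A} (h : wt D = wt E) : weight D = weight E := by
  have hD : ∀ pa ∈ D, pa.2 ∈ support D ∪ support E :=
    fun _ hpa => Finset.mem_union_left _ (mem_support hpa)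
  have hE : ∀ pa ∈ E, pa.2 ∈ support D ∪ support E :=
    fun _ hpa => Finset.mem_union_right _ (mem_support hpa)
  rw [weight_eq_sum_wt hD, weight_eq_sum_wt hE, h]

lemma PEvol.weight_eq (hR : IsPARS R) {D E : PDist A} (h : PEvol R D E) :
    weight E = weight D := by
  induction h with
  | nil => rfl
  | keep p a _ ih => rw [weight_cons, weight_cons, ih]
  | evolve p hr _ ih => rw [weight_append, weight_scale, hR _ _ hr, mul_one, weight_cons, ih]

lemma PEvol.wt_le_of_terminal {D E : PDist A} (h : PEvol R D E) {a : A}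
    (ha : Terminal R a) : wt D a ≤ wt E a := by
  induction h with
  | nil => exact le_rfl
  | keep p b _ ih => rw [wt_cons, wt_cons]; gcongr
  | @evolve b G _ _ p hr _ ih =>
    have hb : b ≠ a := fun hba => ha G (hba ▸ hr)
    rw [wt_cons, wt_append, if_neg hb, zero_add]
    exact le_add_left ih

lemma weight_eq_of_reflTransGen_red (hR : IsPARS R) {D E : PDist A}
    (h : ReflTransGen (Red R) D E) : weight E = weight D := by
  induction h with
  | refl => rfl
  | tail _ hstep ih =>
    rcases hstep with hstep | hstep
    · rw [hstep.weight_eq hR, ih]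
    · rw [weight_eq_of_wt_eq hstep.wt_eq, ih]

lemma wt_le_of_reflTransGen_red {D E : PDist A} (h : ReflTransGen (Red R) D E) {a : A}
    (ha : Terminal R a) : wt D a ≤ wt E a := by
  induction h with
  | refl => exact le_rfl
  | tail _ hstep ih =>
    rcases hstep with hstep | hstep
    · exact ih.trans (hstep.wt_le_of_terminal ha)
    · exact ih.trans (congrFun hstep.wt_eq a).ge

lemma fdist_nonneg (f g : A → ℝ≥0) : 0 ≤ fdist f g := tsum_nonneg fun _ => abs_nonneg _

lemma fdist_comm (f g : A → ℝ≥0) : fdist f g = fdist g f := by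
  simp only [fdist, abs_sub_comm]

lemma summable_abs_sub {f g : A → ℝ≥0} (hf : Summable f) (hg : Summable g) :
    Summable fun a => |(f a : ℝ) - g a| :=
  ((NNReal.summable_coe.mpr hf).sub (NNReal.summable_coe.mpr hg)).abs

lemma fdist_triangle {f g h : A → ℝ≥0} (hf : Summable f) (hg : Summable g) (hh : Summable h) :
    fdist f h ≤ fdist f g + fdist g h := by
  rw [fdist, fdist, fdist, ← (summable_abs_sub hf hg).tsum_add (summable_abs_sub hg hh)]
  exact (summable_abs_sub hf hh).tsum_le_tsum (fun a => abs_sub_le _ _ _)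
    ((summable_abs_sub hf hg).add (summable_abs_sub hg hh))

lemma eq_of_fdist_eq_zero {f g : A → ℝ≥0} (hf : Summable f) (hg : Summable g)
    (h : fdist f g = 0) : f = g := by
  have hsum : HasSum (fun a => |(f a : ℝ) - g a|) 0 := h ▸ (summable_abs_sub hf hg).hasSum
  have hzero := (hasSum_zero_iff_of_nonneg fun a => abs_nonneg _).mp hsum
  funext a
  exact NNReal.coe_injective (sub_eq_zero.mp (abs_eq_zero.mp (congrFun hzero a)))

lemma fdist_eq_sum {f g : A → ℝ≥0} {s : Finset A} (hf : ∀ a ∉ s, f a = 0)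
    (hg : ∀ a ∉ s, g a = 0) : fdist f g = ∑ a ∈ s, |(f a : ℝ) - g a| :=
  tsum_eq_sum fun a ha => by simp [hf a ha, hg a ha]

lemma ldist_le_two_mul_liv (hR : IsPARS R) {D E : PDist A} (h : ReflTransGen (Red R) D E) :
    ldist D E ≤ 2 * liv R D := by
  set s := support D ∪ support E
  have hD : ∀ pa ∈ D, pa.2 ∈ s := fun _ hpa => Finset.mem_union_left _ (mem_support hpa)
  have hE : ∀ pa ∈ E, pa.2 ∈ s := fun _ hpa => Finset.mem_union_right _ (mem_support hpa)
  set term : A → ℝ := fun a => if Terminal R a then (wt D a : ℝ) else 0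
  have hpoint : ∀ a, |(wt D a : ℝ) - wt E a| ≤ wt D a + wt E a - 2 * term a := by
    intro a
    have hD0 := (wt D a).coe_nonneg
    have hE0 := (wt E a).coe_nonneg
    by_cases ha : Terminal R a
    · have hle : (wt D a : ℝ) ≤ wt E a := by exact_mod_cast wt_le_of_reflTransGen_red h ha
      simp only [term, if_pos ha]
      rw [abs_sub_comm, abs_of_nonneg (sub_nonneg.mpr hle)]
      linarith
    · simp only [term, if_neg ha, mul_zero, sub_zero]
      exact abs_sub_le_iff.mpr ⟨by linarith, by linarith⟩
  have hweight : (weight D : ℝ) = ∑ a ∈ s, term a + liv R D := by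
    rw [weight_eq_sum_wt hD, liv_eq_sum_wt hD]
    push_cast
    rw [← Finset.sum_add_distrib]
    refine Finset.sum_congr rfl fun a _ => ?_
    split_ifs <;> simp [term, *]
  calc ldist D E = ∑ a ∈ s, |(wt D a : ℝ) - wt E a| :=
        fdist_eq_sum
          (fun _ ha => wt_eq_zero_of_notMem_support fun h => ha (Finset.mem_union_left _ h))
          (fun _ ha => wt_eq_zero_of_notMem_support fun h => ha (Finset.mem_union_right _ h))
    _ ≤ ∑ a ∈ s, ((wt D a : ℝ) + wt E a - 2 * term a) := Finset.sum_le_sum fun a _ => hpoint a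
    _ = weight D + weight E - 2 * ∑ a ∈ s, term a := by
        rw [weight_eq_sum_wt hD, weight_eq_sum_wt hE]
        push_cast
        rw [Finset.sum_sub_distrib, Finset.sum_add_distrib, Finset.mul_sum]
    _ = 2 * liv R D := by rw [weight_eq_of_reflTransGen_red hR h]; linarith

lemma liv_le_fdist {g : A → ℝ≥0} (hg : Summable g) (hterm : ∀ a, (∃ G, R a G) → g a = 0)
    (D : PDist A) : (liv R D : ℝ) ≤ fdist (wt D) g := by
  rw [liv_eq_sum_wt fun _ => mem_support, NNReal.coe_sum]
  refine (Finset.sum_le_sum fun a _ => ?_).trans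
    ((summable_abs_sub (summable_wt D) hg).sum_le_tsum _ fun a _ => abs_nonneg _)
  split_ifs with ha
  · simp
  · rw [hterm a (not_forall_not.mp ha), NNReal.coe_zero, sub_zero,
      abs_of_nonneg (wt D a).coe_nonneg]

lemma fdist_le_three_mul_of_reflTransGen_red (hR : IsPARS R) {g : A → ℝ≥0} (hg : Summable g)
    (hterm : ∀ a, (∃ G, R a G) → g a = 0) {D C : PDist A} (h : ReflTransGen (Red R) D C) :
    fdist (wt C) g ≤ 3 * fdist (wt D) g :=
  calc fdist (wt C) g ≤ fdist (wt D) (wt C) + fdist (wt D) g := by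
        rw [fdist_comm (wt D)]; exact fdist_triangle (summable_wt C) (summable_wt D) hg
    _ ≤ 2 * liv R D + fdist (wt D) g := by gcongr; exact ldist_le_two_mul_liv hR h
    _ ≤ 3 * fdist (wt D) g := by linarith [liv_le_fdist hg hterm D]

end PPARS

open PPARS Relation in
/-- Distribution-confluent PARS have unique limit distributions: limits of two
infinite `↠`-chains with common root, when terminal, coincide. -/
theorem unique_limit_distributions {A : Type} (R : A → PDist A → Prop)
    (hR : IsPARS R) (hconf : Confluent (Red R))
    (D : PDist A) (E F : ℕ → PDist A) (hE0 : E 0 = D) (hF0 : F 0 = D)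
    (hEchain : ∀ i, Red R (E i) (E (i + 1)))
    (hFchain : ∀ i, Red R (F i) (F (i + 1)))
    (Einf Finf : A → ℝ≥0)
    (hEnorm : (∑' a : A, (Einf a : ℝ≥0∞)) = 1)
    (hFnorm : (∑' a : A, (Finf a : ℝ≥0∞)) = 1)
    (hEterm : ∀ a : A, (∃ G, R a G) → Einf a = 0)
    (hFterm : ∀ a : A, (∃ G, R a G) → Finf a = 0)
    (hElim : ∀ ε : ℝ, 0 < ε → ∃ N : ℕ, ∀ i ≥ N, fdist (wt (E i)) Einf < ε)
    (hFlim : ∀ ε : ℝ, 0 < ε → ∃ N : ℕ, ∀ i ≥ N, fdist (wt (F i)) Finf < ε) :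
    Einf = Finf := by
  have hEsum : Summable Einf :=
    ENNReal.tsum_coe_ne_top_iff_summable.mp (hEnorm ▸ ENNReal.one_ne_top)
  have hFsum : Summable Finf :=
    ENNReal.tsum_coe_ne_top_iff_summable.mp (hFnorm ▸ ENNReal.one_ne_top)
  refine eq_of_fdist_eq_zero hEsum hFsum
    (le_antisymm (le_of_forall_pos_lt_add fun ε hε => ?_) (fdist_nonneg _ _))
  obtain ⟨N, hN⟩ := hElim (ε / 6) (by positivity)
  obtain ⟨M, hM⟩ := hFlim (ε / 6) (by positivity)
  obtain ⟨C, hEC, hFC⟩ := hconf D (E N) (F M)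
    (hE0 ▸ reflTransGen_zero_of_forall_succ hEchain N)
    (hF0 ▸ reflTransGen_zero_of_forall_succ hFchain M)
  calc fdist Einf Finf ≤ fdist (wt C) Einf + fdist (wt C) Finf := by
        rw [← fdist_comm Einf]; exact fdist_triangle hEsum (summable_wt C) hFsum
    _ ≤ 3 * fdist (wt (E N)) Einf + 3 * fdist (wt (F M)) Finf := by
        gcongr
        · exact fdist_le_three_mul_of_reflTransGen_red hR hEsum hEterm hEC
        · exact fdist_le_three_mul_of_reflTransGen_red hR hFsum hFterm hFC
    _ < 0 + ε := by linarith [hN N le_rfl, hM M le_rfl]
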